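/- arXiv:2106.04179 — 2 statements merged into one kernel-verified Lean document; each statement's English description precedes it below -/
import Mathlib

section
/- Let G be a finite simple graph with matching M, α a free vertex, and (a_1, a_2, …, a_{k+1}) an alternating path of matched arcs. Suppose that: (i) there is an M-alternating path from α to a_1 and an M-alternating path from α to ←a_{k+1}; (ii) for every 2 ≤ i ≤ k there exist M-alternating paths from α to a_i and from α to ←a_i; and (iii) for some 2 ≤ x ≤ k+1 there is an M-alternating path from α to a_x that traverses none of the arcs a_j and ←a_j for 1 ≤ j < x. Then there exists an M-alternating path from α to ←a_1. -/
/-!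
Common definitions: matchings as sets of edges, free vertices, alternating
paths (edge membership in `M` alternates, starting with a non-matching edge),
matched arcs (directed traversals of matched edges), etc.
-/

variable {V : Type*}

/-- `M` is a matching of `G`: a set of edges of `G` that are pairwise vertex-disjoint. -/
def IsMatchingSet (G : SimpleGraph V) (M : Set (Sym2 V)) : Prop :=
  M ⊆ G.edgeSet ∧ ∀ e ∈ M, ∀ f ∈ M, e ≠ f → ∀ v : V, ¬(v ∈ e ∧ v ∈ f)

/-- A vertex is free w.r.t. `M` if it is not an endpoint of any edge of `M`. -/
def FreeVertex (M : Set (Sym2 V)) (v : V) : Prop := ∀ e ∈ M, v ∉ e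

/-- The edges of a walk alternate between non-matching and matching edges,
beginning with a non-matching edge: the `i`-th edge is in `M` iff `i` is odd. -/
def AltEdges (M : Set (Sym2 V)) (l : List (Sym2 V)) : Prop :=
  ∀ (i : ℕ) (h : i < l.length), (l[i]'h ∈ M ↔ i % 2 = 1)

/-- A walk traverses the arc `a = (u, v)`: it crosses the edge `{u, v}`
in the direction from `u` to `v`. -/
def Traverses {G : SimpleGraph V} {x y : V} (p : G.Walk x y) (a : V × V) : Prop :=
  ∃ d ∈ p.darts, SimpleGraph.Dart.toProd d = a

/-- A walk ends by traversing the arc `a = (u, v)`, i.e. its last dart goes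
from `u` to `v`. -/
def EndsWithArc {G : SimpleGraph V} {x y : V} (p : G.Walk x y) (a : V × V) : Prop :=
  p.darts.getLast?.map SimpleGraph.Dart.toProd = some a

/-- There is an `M`-alternating path from the (free) vertex `α` to the
matched arc `a = (u, v)`: a simple path starting at `α` whose edges alternate
(beginning with a non-matching edge) and which ends by traversing the matched
edge `{u, v}` from `u` to `v`. -/
def IsAltPathToArc (G : SimpleGraph V) (M : Set (Sym2 V)) (α : V) (a : V × V) : Prop :=
  ∃ p : G.Walk α a.2, p.IsPath ∧ AltEdges M p.edges ∧ EndsWithArc p a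

/-- An alternating path of matched arcs `a 0, a 1, …, a (m-1)`: each is a
matched arc, the underlying matched edges are pairwise distinct, and
consecutive arcs are joined by an edge of `G` not in `M`. -/
def IsArcPathFn (G : SimpleGraph V) (M : Set (Sym2 V)) (a : ℕ → V × V) (m : ℕ) : Prop :=
  (∀ i < m, s((a i).1, (a i).2) ∈ M) ∧
  (∀ i < m, ∀ j < m, i ≠ j → s((a i).1, (a i).2) ≠ s((a j).1, (a j).2)) ∧
  (∀ i, i + 1 < m → G.Adj (a i).2 (a (i + 1)).1 ∧ s((a i).2, (a (i + 1)).1) ∉ M)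

/-- List version of an alternating path of matched arcs. -/
def IsArcPath (G : SimpleGraph V) (M : Set (Sym2 V)) (L : List (V × V)) : Prop :=
  (∀ a ∈ L, s(a.1, a.2) ∈ M) ∧
  (L.map fun a => s(a.1, a.2)).Nodup ∧
  List.Chain' (fun a b => G.Adj a.2 b.1 ∧ s(a.2, b.1) ∉ M) L

open Classical in
/-- The matched arcs traversed by a walk, in order. -/
noncomputable def matchedArcs {G : SimpleGraph V} (M : Set (Sym2 V)) {x y : V}
    (p : G.Walk x y) : List (V × V) :=
  (p.darts.filter fun d => decide (SimpleGraph.Dart.edge d ∈ M)).map SimpleGraph.Dart.toProd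

/-- There is an `M`-augmenting path between `x` and `y`: a simple path whose
edges alternate between matching and non-matching edges and whose first and
last edges are not in `M`. -/
def IsAugPathBetween (G : SimpleGraph V) (M : Set (Sym2 V)) (x y : V) : Prop :=
  ∃ p : G.Walk x y, p.IsPath ∧
    List.Chain' (fun e f => (e ∈ M ↔ f ∉ M)) p.edges ∧
    (∀ e ∈ p.edges.head?, e ∉ M) ∧ (∀ e ∈ p.edges.getLast?, e ∉ M)


/-! ### Auxiliary machinery -/

namespace NAC
open SimpleGraph Walk

variable {V : Type*} {G : SimpleGraph V} {M : Set (Sym2 V)}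

/-- Alternation of a list of edges with an index offset. -/
def AltOff (M : Set (Sym2 V)) (n : ℕ) (l : List (Sym2 V)) : Prop :=
  ∀ (i : ℕ) (h : i < l.length), (l[i]'h ∈ M ↔ (n + i) % 2 = 1)

lemma altEdges_iff {l : List (Sym2 V)} : AltEdges M l ↔ AltOff M 0 l := by
  unfold AltEdges AltOff; simp

lemma AltOff.congr {n m : ℕ} {l : List (Sym2 V)} (hnm : n % 2 = m % 2) (h : AltOff M n l) :
    AltOff M m l := by
  intro i hi
  rw [h i hi]
  omega

lemma altOff_append {n : ℕ} {l1 l2 : List (Sym2 V)} :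
    AltOff M n (l1 ++ l2) ↔ AltOff M n l1 ∧ AltOff M (n + l1.length) l2 := by
  constructor
  · intro h
    refine ⟨fun i hi => ?_, fun i hi => ?_⟩
    · have h2 := h i (by simp only [List.length_append]; omega)
      rwa [List.getElem_append_left hi] at h2
    · have h2 := h (l1.length + i) (by simp only [List.length_append]; omega)
      rw [List.getElem_append_right (by omega)] at h2
      simp only [Nat.add_sub_cancel_left] at h2
      rw [h2]
      omega
  · rintro ⟨h1, h2⟩ i hi
    rcases lt_or_ge i l1.length with hc | hc
    · rw [List.getElem_append_left hc]; exact h1 i hc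
    · rw [List.getElem_append_right hc]
      have h3 := h2 (i - l1.length) (by simp only [List.length_append] at hi; omega)
      rw [h3]
      omega

lemma altOff_nil {n : ℕ} : AltOff M n ([] : List (Sym2 V)) := by
  intro i hi; simp at hi

lemma altOff_cons {n : ℕ} {e : Sym2 V} {l : List (Sym2 V)} :
    AltOff M n (e :: l) ↔ (e ∈ M ↔ n % 2 = 1) ∧ AltOff M (n + 1) l := by
  rw [show e :: l = [e] ++ l from rfl, altOff_append]
  constructor
  · rintro ⟨h1, h2⟩
    refine ⟨by simpa using h1 0 (by simp), by simpa using h2⟩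
  · rintro ⟨h1, h2⟩
    refine ⟨?_, by simpa using h2⟩
    intro i hi
    simp at hi
    subst hi
    simpa using h1

lemma altOff_singleton {n : ℕ} {e : Sym2 V} :
    AltOff M n [e] ↔ (e ∈ M ↔ n % 2 = 1) := by
  rw [altOff_cons]
  simp [altOff_nil]

lemma AltOff.reverse {n : ℕ} {l : List (Sym2 V)} (h : AltOff M n l) :
    AltOff M (n + l.length + 1) l.reverse := by
  intro i hi
  rw [List.getElem_reverse]
  have hi' : i < l.length := by simpa using hi
  have h2 := h (l.length - 1 - i) (by omega)
  rw [h2]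
  omega

lemma AltOff.getLast {n : ℕ} {l : List (Sym2 V)} (h : AltOff M n l) (hl : l ≠ []) :
    (l.getLast hl ∈ M ↔ (n + l.length) % 2 = 0) := by
  rw [List.getLast_eq_getElem]
  rw [h (l.length - 1) (by have := List.length_pos_iff.2 hl; omega)]
  have := List.length_pos_iff.2 hl
  omega

lemma AltOff.head {n : ℕ} {l : List (Sym2 V)} (h : AltOff M n l) (hl : l ≠ []) :
    (l.head hl ∈ M ↔ n % 2 = 1) := by
  rw [List.head_eq_getElem]
  rw [h 0 (by have := List.length_pos_iff.2 hl; omega)]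
  omega

lemma dart_mem_edge_fst (d : G.Dart) : d.toProd.1 ∈ d.edge := by
  rw [show d.edge = s(d.toProd.1, d.toProd.2) from rfl, Sym2.mem_iff]; left; rfl

lemma dart_mem_edge_snd (d : G.Dart) : d.toProd.2 ∈ d.edge := by
  rw [show d.edge = s(d.toProd.1, d.toProd.2) from rfl, Sym2.mem_iff]; right; rfl

lemma dart_toProd_of_edge_eq {d : G.Dart} {x y : V} (h : d.edge = s(x, y)) :
    d.toProd = (x, y) ∨ d.toProd = (y, x) := by
  rw [show d.edge = s(d.toProd.1, d.toProd.2) from rfl] at h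
  rw [Sym2.eq_iff] at h
  rcases h with ⟨h1, h2⟩ | ⟨h1, h2⟩
  · left; exact Prod.ext h1 h2
  · right; exact Prod.ext h1 h2

lemma dart_fst_ne_snd (d : G.Dart) : d.toProd.1 ≠ d.toProd.2 := d.adj.ne

/-- The head dart of a non-nil walk. -/
lemma headDart {u v : V} (p : G.Walk u v) (h : ¬p.Nil) :
    ∃ d : G.Dart, p.darts.head? = some d ∧ d.toProd.1 = u ∧ d ∈ p.darts ∧
      p.edges.head? = some d.edge := by
  rw [Walk.not_nil_iff] at h
  obtain ⟨b, hadj, q, rfl⟩ := h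
  refine ⟨⟨(u, b), hadj⟩, rfl, rfl, by simp [Walk.darts_cons], ?_⟩
  simp [Walk.edges_cons]

lemma darts_ne_nil {u v : V} (p : G.Walk u v) (h : ¬p.Nil) : p.darts ≠ [] := by
  rw [Walk.not_nil_iff_lt_length] at h
  intro hc
  have := p.length_darts
  rw [hc] at this
  simp at this
  omega

/-- The last dart of a non-nil walk. -/
lemma lastDart {u v : V} (p : G.Walk u v) (h : ¬p.Nil) :
    ∃ d : G.Dart, p.darts.getLast? = some d ∧ d.toProd.2 = v ∧ d ∈ p.darts ∧
      p.edges.getLast? = some d.edge := by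
  have hne := darts_ne_nil p h
  refine ⟨p.darts.getLast hne, List.getLast?_eq_getLast hne, (by rw [getLast_darts_eq_lastDart]; rfl),
    List.getLast_mem hne, ?_⟩
  rw [show p.edges = p.darts.map SimpleGraph.Dart.edge from rfl, List.getLast?_map,
    List.getLast?_eq_getLast hne]
  rfl

lemma edges_ne_nil {u v : V} (p : G.Walk u v) (h : ¬p.Nil) : p.edges ≠ [] := by
  have := darts_ne_nil p h
  simpa [show p.edges = p.darts.map SimpleGraph.Dart.edge from rfl]

/-- Split a walk at the first vertex satisfying a predicate. -/
lemma split_first {u t : V} (p : G.Walk u t) (Pr : V → Prop) [DecidablePred Pr]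
    (h : ∃ z ∈ p.support, Pr z) :
    ∃ (v : V) (p1 : G.Walk u v) (p2 : G.Walk v t), p = p1.append p2 ∧ Pr v ∧
      ∀ z ∈ p1.support, Pr z → z = v := by
  induction p with
  | nil =>
    obtain ⟨z, hz, hPz⟩ := h
    simp only [Walk.support_nil, List.mem_singleton] at hz
    subst hz
    exact ⟨_, Walk.nil, Walk.nil, rfl, hPz, by simp⟩
  | @cons u' v' w' hadj q ih =>
    by_cases hu : Pr u'
    · exact ⟨_, Walk.nil, Walk.cons hadj q, rfl, hu, by simp⟩
    · have h' : ∃ z ∈ q.support, Pr z := by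
        obtain ⟨z, hz, hPz⟩ := h
        rw [Walk.support_cons, List.mem_cons] at hz
        rcases hz with rfl | hz
        · exact absurd hPz hu
        · exact ⟨z, hz, hPz⟩
      obtain ⟨v, q1, q2, hq, hv, hmin⟩ := ih h'
      refine ⟨v, Walk.cons hadj q1, q2, by rw [Walk.cons_append, ← hq], hv, ?_⟩
      intro z hz hPz
      rw [Walk.support_cons, List.mem_cons] at hz
      rcases hz with rfl | hz
      · exact absurd hPz hu
      · exact hmin z hz hPz

lemma mem_both_eq_mid {u m t : V} {p1 : G.Walk u m} {p2 : G.Walk m t}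
    (hp : (p1.append p2).IsPath) {z : V} (h1 : z ∈ p1.support) (h2 : z ∈ p2.support) :
    z = m := by
  have hnd : (p1.support ++ p2.support.tail).Nodup := by
    rw [← Walk.support_append]; exact hp.support_nodup
  rw [List.nodup_append] at hnd
  rw [p2.support_eq_cons, List.mem_cons] at h2
  rcases h2 with rfl | h2
  · rfl
  · exact absurd rfl (hnd.2.2 z h1 z h2)

/-- An appended walk is a path if both pieces are paths meeting only at the middle. -/
lemma isPath_append {u m t : V} {p1 : G.Walk u m} {p2 : G.Walk m t}
    (h1 : p1.IsPath) (h2 : p2.IsPath)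
    (hint : ∀ z, z ∈ p1.support → z ∈ p2.support → z = m) :
    (p1.append p2).IsPath := by
  rw [Walk.isPath_def, Walk.support_append, List.nodup_append]
  refine ⟨h1.support_nodup, (h2.support_nodup).sublist (List.tail_sublist _), ?_⟩
  intro z hz1 b hz2 hzb; subst hzb
  have hz2' : z ∈ p2.support := by
    rw [p2.support_eq_cons]; exact List.mem_cons_of_mem _ hz2
  have := hint z hz1 hz2'
  subst this
  have : p2.support.Nodup := h2.support_nodup
  rw [p2.support_eq_cons] at this
  exact (List.nodup_cons.1 this).1 hz2

lemma mem_append_support {u m t : V} {p1 : G.Walk u m} {p2 : G.Walk m t} {z : V} :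
    z ∈ (p1.append p2).support ↔ z ∈ p1.support ∨ z ∈ p2.support := by
  rw [Walk.support_append, List.mem_append]
  constructor
  · rintro (h | h)
    · exact Or.inl h
    · right; rw [p2.support_eq_cons]; exact List.mem_cons_of_mem _ h
  · rintro (h | h)
    · exact Or.inl h
    · rw [p2.support_eq_cons, List.mem_cons] at h
      rcases h with rfl | h
      · left; exact p1.end_mem_support
      · exact Or.inr h

lemma matching_unique (hM : IsMatchingSet G M) {e f : Sym2 V} (he : e ∈ M) (hf : f ∈ M)
    {z : V} (hz : z ∈ e) (hz' : z ∈ f) : e = f := by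
  by_contra h
  exact hM.2 e he f hf h z ⟨hz, hz'⟩

/-- At an interior junction of an alternating path, exactly one of the two
incident edges is matched. -/
lemma junction' (hM : IsMatchingSet G M) {u m t : V} {p1 : G.Walk u m} {p2 : G.Walk m t}
    (halt : AltOff M 0 (p1.append p2).edges) (h1 : ¬p1.Nil) (h2 : ¬p2.Nil) :
    ∃ (d1 d2 : G.Dart), p1.darts.getLast? = some d1 ∧ p2.darts.head? = some d2 ∧
      d1 ∈ p1.darts ∧ d2 ∈ p2.darts ∧
      d1.toProd.2 = m ∧ d2.toProd.1 = m ∧ AltOff M 0 p1.edges ∧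
      AltOff M p1.length p2.edges ∧
      ((d1.edge ∈ M ∧ d2.edge ∉ M ∧ p1.length % 2 = 0) ∨
       (d2.edge ∈ M ∧ d1.edge ∉ M ∧ p1.length % 2 = 1)) := by
  obtain ⟨d1, hd1last, hd1snd, hd1mem, hd1e⟩ := lastDart p1 h1
  obtain ⟨d2, hd2head, hd2fst, hd2mem, hd2e⟩ := headDart p2 h2
  rw [Walk.edges_append, altOff_append] at halt
  obtain ⟨halt1, halt2⟩ := halt
  have hlen : p1.edges.length = p1.length := p1.length_edges
  have halt2' : AltOff M p1.length p2.edges := by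
    rw [Nat.zero_add] at halt2; rwa [hlen] at halt2
  have hne1 := edges_ne_nil p1 h1
  have hne2 := edges_ne_nil p2 h2
  have he1 : p1.edges.getLast hne1 = d1.edge := by
    have := List.getLast?_eq_getLast hne1
    rw [this] at hd1e; exact (Option.some_injective _ hd1e.symm).symm
  have he2 : p2.edges.head hne2 = d2.edge := by
    have := List.head?_eq_head hne2
    rw [this] at hd2e; exact (Option.some_injective _ hd2e.symm).symm
  have hp1 : d1.edge ∈ M ↔ p1.length % 2 = 0 := by
    rw [← he1, halt1.getLast hne1, hlen]; omega
  have hp2 : d2.edge ∈ M ↔ p1.length % 2 = 1 := by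
    rw [← he2, halt2'.head hne2]
  refine ⟨d1, d2, hd1last, hd2head, hd1mem, hd2mem, hd1snd, hd2fst, halt1, halt2', ?_⟩
  rcases Nat.even_or_odd p1.length with hev | hod
  · left
    have hev' := Nat.even_iff.1 hev
    refine ⟨hp1.2 hev', ?_, hev'⟩
    rw [hp2]; omega
  · right
    have hod' := Nat.odd_iff.1 hod
    refine ⟨hp2.2 hod', ?_, hod'⟩
    rw [hp1]; omega

/-- Like `junction'`, but identifying the matched edge at the junction. -/
lemma junction (hM : IsMatchingSet G M) {u m t : V} {p1 : G.Walk u m} {p2 : G.Walk m t}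
    (halt : AltOff M 0 (p1.append p2).edges) (h1 : ¬p1.Nil) (h2 : ¬p2.Nil)
    {e : Sym2 V} (he : e ∈ M) (hme : m ∈ e) :
    ∃ (d1 d2 : G.Dart), p1.darts.getLast? = some d1 ∧ p2.darts.head? = some d2 ∧
      d1 ∈ p1.darts ∧ d2 ∈ p2.darts ∧
      d1.toProd.2 = m ∧ d2.toProd.1 = m ∧ AltOff M 0 p1.edges ∧
      AltOff M p1.length p2.edges ∧
      ((d1.edge = e ∧ d2.edge ∉ M ∧ p1.length % 2 = 0) ∨
       (d2.edge = e ∧ d1.edge ∉ M ∧ p1.length % 2 = 1)) := by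
  obtain ⟨d1, d2, ha, hb, hc, hd, hsnd, hfst, h7, h8, hcase⟩ := junction' hM halt h1 h2
  refine ⟨d1, d2, ha, hb, hc, hd, hsnd, hfst, h7, h8, ?_⟩
  rcases hcase with ⟨hm1, hm2, hm3⟩ | ⟨hm1, hm2, hm3⟩
  · exact Or.inl ⟨matching_unique hM hm1 he (hsnd ▸ dart_mem_edge_snd d1) hme, hm2, hm3⟩
  · exact Or.inr ⟨matching_unique hM hm1 he (hfst ▸ dart_mem_edge_fst d2) hme, hm2, hm3⟩

def CarcIn (a : ℕ → V × V) (x : ℕ) (z : V) : Prop :=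
  ∃ j, j < x ∧ (z = (a j).1 ∨ z = (a j).2)

lemma carcIn_mono {a : ℕ → V × V} {x y : ℕ} (h : x ≤ y) {z : V} (hz : CarcIn a x z) :
    CarcIn a y z := by
  obtain ⟨j, hj, hzj⟩ := hz
  exact ⟨j, by omega, hzj⟩

variable {a : ℕ → V × V} {k : ℕ}

lemma arc_mem_eq (hM : IsMatchingSet G M) (harc : IsArcPathFn G M a (k + 1))
    {i j : ℕ} (hi : i ≤ k) (hj : j ≤ k) {z : V}
    (h1 : z = (a i).1 ∨ z = (a i).2) (h2 : z = (a j).1 ∨ z = (a j).2) : i = j := by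
  by_contra hne
  refine hM.2 _ (harc.1 i (by omega)) _ (harc.1 j (by omega))
    (harc.2.1 i (by omega) j (by omega) hne) z ⟨?_, ?_⟩ <;>
    rw [Sym2.mem_iff] <;> tauto

lemma arc_fst_ne_snd (hM : IsMatchingSet G M) (harc : IsArcPathFn G M a (k + 1))
    {i : ℕ} (hi : i ≤ k) : (a i).1 ≠ (a i).2 :=
  (G.mem_edgeSet.1 (hM.1 (harc.1 i (by omega)))).ne

lemma chain_exists (hM : IsMatchingSet G M) (harc : IsArcPathFn G M a (k + 1)) :
    ∀ j, j ≤ k → ∃ c : G.Walk (a j).1 (a 0).1, AltOff M 0 c.edges ∧ c.support.Nodup ∧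
      c.darts.length = 2 * j ∧ (∀ z ∈ c.support, z = (a j).1 ∨ CarcIn a j z) ∧
      (1 ≤ j → c.darts.getLast?.map SimpleGraph.Dart.toProd = some ((a 0).2, (a 0).1)) := by
  intro j
  induction j with
  | zero =>
    intro _
    refine ⟨Walk.nil, altOff_nil, by simp, by simp, ?_, by omega⟩
    intro z hz
    simp only [Walk.support_nil, List.mem_singleton] at hz
    exact Or.inl hz
  | succ n ih =>
    intro hj
    obtain ⟨c', halt', hnd', hlen', hmem', hlast'⟩ := ih (by omega)
    have hmedn : s((a n).1, (a n).2) ∈ M := harc.1 n (by omega)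
    have adj1 : G.Adj (a (n + 1)).1 (a n).2 := ((harc.2.2 n (by omega)).1).symm
    have adj2 : G.Adj (a n).2 (a n).1 := (G.mem_edgeSet.1 (hM.1 hmedn)).symm
    refine ⟨Walk.cons adj1 (Walk.cons adj2 c'), ?_, ?_, ?_, ?_, ?_⟩
    · rw [Walk.edges_cons, Walk.edges_cons, altOff_cons, altOff_cons]
      refine ⟨?_, ?_, halt'.congr (by omega)⟩
      · simp only [Nat.zero_mod]
        constructor
        · intro hmem
          exact absurd (by rwa [Sym2.eq_swap] at hmem) (harc.2.2 n (by omega)).2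
        · omega
      · refine ⟨fun _ => by norm_num, fun _ => by rwa [Sym2.eq_swap]⟩
    · rw [Walk.support_cons, Walk.support_cons]
      rw [List.nodup_cons, List.nodup_cons]
      refine ⟨?_, ?_, hnd'⟩
      · rw [List.mem_cons]
        rintro (hc | hc)
        · have := arc_mem_eq hM harc (by omega : n + 1 ≤ k) (by omega : n ≤ k)
            (Or.inl rfl) (Or.inr hc)
          omega
        · rcases hmem' _ hc with h | ⟨i, hi, h⟩
          · have := arc_mem_eq hM harc (by omega : n + 1 ≤ k) (by omega : n ≤ k)
              (Or.inl rfl) (Or.inl h)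
            omega
          · have := arc_mem_eq hM harc (by omega : n + 1 ≤ k) (by omega : i ≤ k)
              (Or.inl rfl) (by tauto)
            omega
      · intro hc
        rcases hmem' _ hc with h | ⟨i, hi, h⟩
        · exact arc_fst_ne_snd hM harc (by omega : n ≤ k) h.symm
        · have := arc_mem_eq hM harc (by omega : n ≤ k) (by omega : i ≤ k)
            (Or.inr rfl) (by tauto)
          omega
    · rw [Walk.darts_cons, Walk.darts_cons]
      simp only [List.length_cons, hlen']
      omega
    · intro z hz
      rw [Walk.support_cons, Walk.support_cons, List.mem_cons, List.mem_cons] at hz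
      rcases hz with rfl | rfl | hz
      · exact Or.inl rfl
      · exact Or.inr ⟨n, by omega, Or.inr rfl⟩
      · rcases hmem' _ hz with h | ⟨i, hi, h⟩
        · exact Or.inr ⟨n, by omega, Or.inl h⟩
        · exact Or.inr ⟨i, by omega, h⟩
    · intro _
      rw [Walk.darts_cons, Walk.darts_cons]
      rcases Nat.eq_zero_or_pos n with rfl | hn
      · have : c'.darts = [] := List.length_eq_zero_iff.1 (by omega)
        rw [this, List.getLast?_cons_cons]
        rfl
      · obtain ⟨d, l, hdl⟩ := List.exists_cons_of_ne_nil
          (show c'.darts ≠ [] by intro hc; rw [hc] at hlen'; simp at hlen'; omega)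
        rw [hdl, List.getLast?_cons_cons, List.getLast?_cons_cons, ← hdl]
        exact hlast' (by omega)

lemma mem_of_getLast?' {α : Type*} {l : List α} {d : α} (h : l.getLast? = some d) : d ∈ l := by
  rw [List.getLast?_eq_some_iff] at h
  obtain ⟨ys, rfl⟩ := h
  simp

lemma endsWithArc_dart {u v : V} {p : G.Walk u v} {ar : V × V} (h : EndsWithArc p ar) :
    ∃ d : G.Dart, p.darts.getLast? = some d ∧ d ∈ p.darts ∧ d.toProd = ar ∧
      d.edge = s(ar.1, ar.2) := by
  unfold EndsWithArc at h
  rw [Option.map_eq_some_iff] at h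
  obtain ⟨d, hd, hdar⟩ := h
  refine ⟨d, hd, mem_of_getLast?' hd, hdar, ?_⟩
  rw [show d.edge = s(d.toProd.1, d.toProd.2) from rfl, hdar]

lemma endsWithArc_append {u m t : V} {p1 : G.Walk u m} {p2 : G.Walk m t} {ar : V × V}
    (h : EndsWithArc p2 ar) : EndsWithArc (p1.append p2) ar := by
  obtain ⟨d, hd, _, hdar, _⟩ := endsWithArc_dart h
  unfold EndsWithArc
  rw [Walk.darts_append, List.getLast?_append, hd]
  simp [hdar]

lemma endsWithArc_single {u v : V} (h : G.Adj u v) :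
    EndsWithArc (Walk.cons h Walk.nil) (u, v) := by
  unfold EndsWithArc
  simp [Walk.darts_cons]

lemma endsWithArc_of_getLast {u v : V} {p : G.Walk u v} {d : G.Dart} {ar : V × V}
    (h : p.darts.getLast? = some d) (har : d.toProd = ar) : EndsWithArc p ar := by
  unfold EndsWithArc
  rw [h]
  simp [har]

lemma even_of_ends_matched {u v : V} {p : G.Walk u v} (halt : AltOff M 0 p.edges)
    {ar : V × V} (hend : EndsWithArc p ar) (hm : s(ar.1, ar.2) ∈ M) :
    p.edges.length % 2 = 0 := by
  obtain ⟨d, hd, hmem, htp, hedge⟩ := endsWithArc_dart hend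
  have hne : p.edges ≠ [] := by
    intro hc
    have : p.darts = [] := by
      have := congrArg List.length hc
      simp only [show p.edges = p.darts.map SimpleGraph.Dart.edge from rfl] at this
      simpa using List.length_eq_zero_iff.1 (by simpa using this : p.darts.length = 0)
    rw [this] at hd; simp at hd
  have hgl : p.edges.getLast hne = d.edge := by
    have h2 : p.edges.getLast? = some d.edge := by
      rw [show p.edges = p.darts.map SimpleGraph.Dart.edge from rfl, List.getLast?_map, hd]
      rfl
    rw [List.getLast?_eq_getLast hne] at h2
    exact Option.some_injective _ h2
  have := halt.getLast hne
  rw [hgl, hedge] at this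
  have h3 := this.1 hm
  omega


lemma getLast?_cons_of_ne {γ : Type*} (d : γ) {l : List γ} (h : l ≠ []) :
    (d :: l).getLast? = l.getLast? := by
  obtain ⟨y, ys, rfl⟩ := List.exists_cons_of_ne_nil h
  exact List.getLast?_cons_cons

lemma edges_getLast_eq {u v : V} {p : G.Walk u v} {d : G.Dart}
    (hd : p.darts.getLast? = some d) (hne : p.edges ≠ []) :
    p.edges.getLast hne = d.edge := by
  have h2 : p.edges.getLast? = some d.edge := by
    rw [show p.edges = p.darts.map SimpleGraph.Dart.edge from rfl, List.getLast?_map, hd]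
    rfl
  rw [List.getLast?_eq_getLast hne] at h2
  exact Option.some_injective _ h2

lemma getLast?_darts_append_right {u m t : V} {p1 : G.Walk u m} {p2 : G.Walk m t}
    (h2 : ¬p2.Nil) : (p1.append p2).darts.getLast? = p2.darts.getLast? := by
  rw [Walk.darts_append, List.getLast?_append]
  obtain ⟨d, hd, _, _, _⟩ := lastDart p2 h2
  rw [hd]
  rfl

open Classical in
lemma master {V : Type*} [Fintype V] (G : SimpleGraph V) (M : Set (Sym2 V))
    (hM : IsMatchingSet G M) (α : V) (hα : FreeVertex M α) (a : ℕ → V × V) (k : ℕ)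
    (harc : IsArcPathFn G M a (k + 1))
    (hmid : ∀ i, 1 ≤ i → i < k →
      IsAltPathToArc G M α (a i) ∧ IsAltPathToArc G M α ((a i).swap)) :
    ∀ N x, 1 ≤ x → x ≤ k →
      ∀ P : G.Walk α (a x).2, P.IsPath → AltOff M 0 P.edges → EndsWithArc P (a x) →
        (∀ z ∈ P.support, ¬ CarcIn a x z) →
      ∀ Q : G.Walk α (a x).1, Q.IsPath → AltOff M 0 Q.edges → EndsWithArc Q ((a x).swap) →
        x * (Fintype.card V + 1)
          + (Q.support.filter fun z => decide (CarcIn a x z)).length ≤ N →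
      IsAltPathToArc G M α ((a 0).swap) := by
  intro N
  induction N with
  | zero =>
    intro x hx1 hx2 P _ _ _ _ Q _ _ _ hle
    exfalso
    have h1 : 1 * (Fintype.card V + 1) ≤ x * (Fintype.card V + 1) :=
      Nat.mul_le_mul_right _ hx1
    omega
  | succ N ih =>
    intro x hx1 hx2 P hPp hPalt hPend hPavoid Q hQp hQalt hQend hmeas
    have hmedx : s((a x).1, (a x).2) ∈ M := harc.1 x (by omega)
    have hmed0 : s((a 0).1, (a 0).2) ∈ M := harc.1 0 (by omega)
    have hαne : ∀ i, i ≤ k → ∀ z, z = (a i).1 ∨ z = (a i).2 → α ≠ z := by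
      intro i hi z hz hc
      exact hα _ (harc.1 i (by omega)) (by subst hc; exact Sym2.mem_iff.2 hz)
    by_cases hQC : ∃ z ∈ Q.support, CarcIn a x z
    case neg =>
      obtain ⟨c, hcalt, hcnd, hclen, hcmem, hclast⟩ := chain_exists hM harc x hx2
      have hQev : Q.edges.length % 2 = 0 :=
        even_of_ends_matched hQalt hQend (by rw [Sym2.eq_swap]; exact hmedx)
      refine ⟨Q.append c, ?_, ?_, endsWithArc_append (hclast hx1)⟩
      · refine isPath_append hQp ((Walk.isPath_def _).2 hcnd) ?_
        intro z hz1 hz2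
        rcases hcmem z hz2 with h | h
        · exact h
        · exact absurd (⟨z, hz1, h⟩ : ∃ z ∈ Q.support, CarcIn a x z) hQC
      · rw [altEdges_iff, Walk.edges_append, altOff_append]
        exact ⟨hQalt, hcalt.congr (by omega)⟩
    case pos =>
    obtain ⟨v, Q1, Q2, hQsplit, hvC, hQmin⟩ := split_first Q (CarcIn a x) hQC
    obtain ⟨j, hjx, hvj⟩ := hvC
    have hjk : j ≤ k := by omega
    have hmedj : s((a j).1, (a j).2) ∈ M := harc.1 j (by omega)
    have hvmem : v ∈ s((a j).1, (a j).2) := Sym2.mem_iff.2 hvj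
    have hQ1nil : ¬Q1.Nil := Walk.not_nil_of_ne (hαne j hjk v hvj)
    have hQ2nil : ¬Q2.Nil := Walk.not_nil_of_ne (by
      intro hc
      have := arc_mem_eq hM harc hjk hx2 hvj (Or.inl hc)
      omega)
    rw [hQsplit] at hQp hQalt hQend
    obtain ⟨d1, d2, hd1l, hd2h, hd1m, hd2m, hd1snd, hd2fst, haltQ1, haltQ2, hcase⟩ :=
      junction hM hQalt hQ1nil hQ2nil hmedj hvmem
    have hQ1sub : ∀ z, z ∈ Q1.support → z ∈ Q.support := by
      intro z hz
      rw [hQsplit]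
      exact mem_append_support.2 (Or.inl hz)
    rcases hcase with ⟨hde, hd2nm, hpar⟩ | ⟨hde, hd1nm, hpar⟩
    · -- CASE: Q1 arrives at v along the matched edge
      rcases dart_toProd_of_edge_eq hde with htp | htp
      · -- impossible: the arc (a j) is traversed forwards into (a j).2
        exfalso
        have hfst : (a j).1 ∈ Q1.support := by
          have := Walk.dart_fst_mem_support_of_mem_darts Q1 hd1m
          rwa [show d1.toProd.1 = (a j).1 from by rw [htp]] at this
        have h1 := hQmin _ hfst ⟨j, hjx, Or.inl rfl⟩
        have hv2 : v = (a j).2 := by rw [← hd1snd, htp]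
        exact arc_fst_ne_snd hM harc hjk (h1.trans hv2)
      · -- CASE A: Q1 ends with the reverse arc of (a j)
        have hv1 : v = (a j).1 := by rw [← hd1snd, htp]
        subst hv1
        rcases Nat.eq_zero_or_pos j with rfl | hj1
        · exact ⟨Q1, hQp.of_append_left, altEdges_iff.2 haltQ1,
            endsWithArc_of_getLast hd1l htp⟩
        · obtain ⟨c, hcalt, hcnd, hclen, hcmem, hclast⟩ := chain_exists hM harc j hjk
          refine ⟨Q1.append c, ?_, ?_, endsWithArc_append (hclast hj1)⟩
          · refine isPath_append hQp.of_append_left ((Walk.isPath_def _).2 hcnd) ?_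
            intro z hz1 hz2
            rcases hcmem z hz2 with h | h
            · exact h
            · exact hQmin z hz1 (carcIn_mono (by omega) h)
          · rw [altEdges_iff, Walk.edges_append, altOff_append]
            refine ⟨haltQ1, hcalt.congr ?_⟩
            have hl : Q1.edges.length = Q1.length := Q1.length_edges
            omega
    · -- CASE: Q departs from v along the matched edge
      rcases dart_toProd_of_edge_eq hde with htp | htp
      · -- v = (a j).1, departure along the arc (a j) : CASE C / CASE E
        have hv1 : v = (a j).1 := by rw [← hd2fst, htp]
        subst hv1
        rcases Nat.eq_zero_or_pos j with rfl | hj1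
        · -- CASE E
          obtain ⟨b, hadj, d', hQ2⟩ := Walk.not_nil_iff.1 hQ2nil
          have hd2' : d2 = ⟨((a 0).1, b), hadj⟩ := by
            rw [hQ2, Walk.darts_cons, List.head?_cons] at hd2h
            exact (Option.some_injective _ hd2h).symm
          have hb : b = (a 0).2 := by
            have h2 := congrArg Prod.snd htp
            rw [hd2'] at h2
            exact h2
          subst hb
          rw [hQ2] at hQsplit hQp hQalt hQend haltQ2
          have hQ2path : (Walk.cons hadj d').IsPath := hQp.of_append_right
          have hd'p : d'.IsPath := hQ2path.of_cons
          have hv_nd' : (a 0).1 ∉ d'.support := by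
            have h2 := hQ2path.support_nodup
            rw [Walk.support_cons, List.nodup_cons] at h2
            exact h2.1
          have hα_nd' : α ∉ d'.support := by
            intro hc
            have h2 : α ∈ (Walk.cons hadj d').support := by
              rw [Walk.support_cons]; exact List.mem_cons_of_mem _ hc
            have h3 := mem_both_eq_mid hQp Q1.start_mem_support h2
            exact hαne 0 (by omega) _ (Or.inl h3) rfl
          have hd'nil : ¬d'.Nil := Walk.not_nil_of_ne (by
            intro hc
            have h2 := arc_mem_eq hM harc (by omega : 0 ≤ k) hx2 (Or.inr rfl) (Or.inl hc)
            omega)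
          have hd'alt : AltOff M 0 d'.edges := by
            rw [Walk.edges_cons, altOff_cons] at haltQ2
            exact haltQ2.2.congr (by omega)
          obtain ⟨dQ, hdQl, hdQm, hdQtp, hdQe⟩ := endsWithArc_dart hQend
          have hd'last : d'.darts.getLast? = some dQ := by
            rw [getLast?_darts_append_right Walk.not_nil_cons, Walk.darts_cons,
              getLast?_cons_of_ne _ (darts_ne_nil d' hd'nil)] at hdQl
            exact hdQl
          have hdQd' : dQ ∈ d'.darts := mem_of_getLast?' hd'last
          have hax2d' : (a x).2 ∈ d'.support := by
            have h2 := Walk.dart_fst_mem_support_of_mem_darts d' hdQd'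
            rwa [show dQ.toProd.1 = (a x).2 from by rw [hdQtp]; rfl] at h2
          have hQsup : Q.support = Q1.support ++ d'.support := by
            rw [hQsplit, Walk.support_append, Walk.support_cons, List.tail_cons]
          by_cases hE : ∃ z ∈ P.support, z ∈ d'.support ∧ z ≠ (a x).1 ∧ z ≠ (a x).2
          case neg =>
            obtain ⟨w2, S, T, hd'split, hw2, _⟩ :=
              split_first d' (fun z => z = (a x).2) ⟨(a x).2, hax2d', rfl⟩
            subst hw2
            have hd'p2 : (S.append T).IsPath := hd'split ▸ hd'p
            have hSp : S.IsPath := hd'p2.of_append_left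
            have hSnil : ¬S.Nil := Walk.not_nil_of_ne (by
              intro hc
              have h2 := arc_mem_eq hM harc (by omega : 0 ≤ k) hx2 (Or.inr rfl)
                (Or.inr hc)
              omega)
            have hSalt : AltOff M 0 S.edges := by
              have h2 := hd'alt
              rw [hd'split, Walk.edges_append, altOff_append] at h2
              exact h2.1
            have hax1S : (a x).1 ∉ S.support := by
              intro hc
              have h2 := mem_both_eq_mid hd'p2 hc T.end_mem_support
              exact arc_fst_ne_snd hM harc hx2 h2
            have hSsub : ∀ z, z ∈ S.support → z ∈ d'.support := by
              intro z hz
              rw [hd'split]; exact mem_append_support.2 (Or.inl hz)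
            obtain ⟨dS, hdSl, hdSsnd, hdSm, hdSe⟩ := lastDart S hSnil
            have hSlast_nm : dS.edge ∉ M := by
              intro hmm
              have heq : dS.edge = s((a x).1, (a x).2) :=
                matching_unique hM hmm hmedx (hdSsnd ▸ dart_mem_edge_snd dS)
                  (Sym2.mem_iff.2 (Or.inr rfl))
              rcases dart_toProd_of_edge_eq heq with h | h
              · refine hax1S ?_
                have h2 := Walk.dart_fst_mem_support_of_mem_darts S hdSm
                rwa [show dS.toProd.1 = (a x).1 from by rw [h]] at h2
              · have h2 : dS.toProd.2 = (a x).1 := by rw [h]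
                rw [hdSsnd] at h2
                exact arc_fst_ne_snd hM harc hx2 h2.symm
            have hSodd : S.edges.length % 2 = 1 := by
              have hne := edges_ne_nil S hSnil
              have hgl := hSalt.getLast hne
              rw [edges_getLast_eq hdSl hne] at hgl
              by_contra hodd
              exact hSlast_nm (hgl.2 (by omega))
            have hPev : P.edges.length % 2 = 0 := even_of_ends_matched hPalt hPend hmedx
            have adj0r : G.Adj (a 0).2 (a 0).1 := (G.mem_edgeSet.1 (hM.1 hmedj)).symm
            have hlrev : S.reverse.edges.length = S.edges.length := by
              rw [Walk.edges_reverse, List.length_reverse]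
            refine ⟨(P.append S.reverse).append (Walk.cons adj0r Walk.nil), ?_, ?_,
              endsWithArc_append (endsWithArc_single adj0r)⟩
            · refine isPath_append (isPath_append hPp hSp.reverse ?_) ?_ ?_
              · intro z hz1 hz2
                rw [Walk.support_reverse, List.mem_reverse] at hz2
                by_contra hzne
                exact hE ⟨z, hz1, hSsub z hz2, fun hc => hax1S (hc ▸ hz2), hzne⟩
              · rw [Walk.isPath_def]
                simp [adj0r.ne]
              · intro z hz1 hz2
                simp only [Walk.support_cons, Walk.support_nil, List.mem_cons,
                  List.mem_singleton, List.not_mem_nil, or_false] at hz2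
                rcases hz2 with rfl | rfl
                · rfl
                · exfalso
                  rcases mem_append_support.1 hz1 with h | h
                  · exact hPavoid _ h ⟨0, by omega, Or.inl rfl⟩
                  · rw [Walk.support_reverse, List.mem_reverse] at h
                    exact hv_nd' (hSsub _ h)
            · rw [altEdges_iff, Walk.edges_append, altOff_append, Walk.edges_append,
                altOff_append]
              refine ⟨⟨hPalt, ?_⟩, ?_⟩
              · rw [Walk.edges_reverse]
                exact hSalt.reverse.congr (by omega)
              · rw [Walk.edges_cons, Walk.edges_nil, altOff_singleton,
                  List.length_append, hlrev]
                exact ⟨fun _ => by omega, fun _ => by rw [Sym2.eq_swap]; exact hmedj⟩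
          case pos =>
            obtain ⟨w, P1, P2, hPsplit, hwpred, hPmin⟩ :=
              split_first P (fun z => z ∈ d'.support ∧ z ≠ (a x).1 ∧ z ≠ (a x).2) hE
            obtain ⟨hwd', hwax1, hwax2⟩ := hwpred
            have hwP : w ∈ P.support := by
              rw [hPsplit]; exact mem_append_support.2 (Or.inl P1.end_mem_support)
            have hwC : ¬ CarcIn a x w := hPavoid w hwP
            have hP1nil : ¬P1.Nil := Walk.not_nil_of_ne (fun hc => hα_nd' (hc ▸ hwd'))
            have hP2nil : ¬P2.Nil := Walk.not_nil_of_ne hwax2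
            rw [hPsplit] at hPp hPalt hPend hPavoid
            obtain ⟨w', S1, S2, hd'split, hw', -⟩ :=
              split_first d' (fun z => w = z) ⟨w, hwd', rfl⟩
            subst hw'
            have hd'p' : (S1.append S2).IsPath := hd'split ▸ hd'p
            have hd'alt' : AltOff M 0 (S1.append S2).edges := hd'split ▸ hd'alt
            have hS1nil : ¬S1.Nil := Walk.not_nil_of_ne (by
              intro hc
              exact hwC ⟨0, by omega, Or.inr hc.symm⟩)
            have hS2nil : ¬S2.Nil := Walk.not_nil_of_ne hwax1
            have hS1sub : ∀ z, z ∈ S1.support → z ∈ d'.support := by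
              intro z hz; rw [hd'split]; exact mem_append_support.2 (Or.inl hz)
            have hS2sub : ∀ z, z ∈ S2.support → z ∈ d'.support := by
              intro z hz; rw [hd'split]; exact mem_append_support.2 (Or.inr hz)
            obtain ⟨dP, hdPl, hdPm, hdPtp, hdPe⟩ := endsWithArc_dart hPend
            have hdPP2 : P2.darts.getLast? = some dP := by
              rwa [getLast?_darts_append_right hP2nil] at hdPl
            have hax1P2 : (a x).1 ∈ P2.support := by
              have h2 := Walk.dart_fst_mem_support_of_mem_darts P2 (mem_of_getLast?' hdPP2)
              rwa [show dP.toProd.1 = (a x).1 from by rw [hdPtp]] at h2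
            have hax1_nP1 : (a x).1 ∉ P1.support := fun hc =>
              hwax1 (mem_both_eq_mid hPp hc hax1P2).symm
            have hax2_nP1 : (a x).2 ∉ P1.support := fun hc =>
              hwax2 (mem_both_eq_mid hPp hc P2.end_mem_support).symm
            have hP1S : ∀ z, z ∈ P1.support → z ∈ d'.support → z = w := by
              intro z hz1 hz2
              by_cases h1 : z = (a x).1
              · exact absurd (h1 ▸ hz1) hax1_nP1
              by_cases h2 : z = (a x).2
              · exact absurd (h2 ▸ hz1) hax2_nP1
              exact hPmin z hz1 ⟨hz2, h1, h2⟩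
            have hP1sub : ∀ z, z ∈ P1.support → z ∈ (P1.append P2).support :=
              fun z hz => mem_append_support.2 (Or.inl hz)
            obtain ⟨dp1, dp2, hdp1l, hdp2h, hdp1m, hdp2m, hdp1snd, hdp2fst, haltP1, haltP2,
              hcaseP⟩ := junction' hM hPalt hP1nil hP2nil
            obtain ⟨ds1, ds2, hds1l, hds2h, hds1m, hds2m, hds1snd, hds2fst, haltS1, haltS2,
              hcaseS⟩ := junction' hM hd'alt' hS1nil hS2nil
            have adj0r : G.Adj (a 0).2 (a 0).1 := (G.mem_edgeSet.1 (hM.1 hmedj)).symm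
            have comb1 : (P1.length + S1.length) % 2 = 1 →
                IsAltPathToArc G M α ((a 0).swap) := by
              intro hparodd
              have hl1 : P1.edges.length = P1.length := P1.length_edges
              have hl2 : S1.edges.length = S1.length := S1.length_edges
              have hlrev : S1.reverse.edges.length = S1.edges.length := by
                rw [Walk.edges_reverse, List.length_reverse]
              refine ⟨(P1.append S1.reverse).append (Walk.cons adj0r Walk.nil), ?_, ?_,
                endsWithArc_append (endsWithArc_single adj0r)⟩
              · refine isPath_append (isPath_append hPp.of_append_left
                  hd'p'.of_append_left.reverse ?_) ?_ ?_
                · intro z hz1 hz2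
                  rw [Walk.support_reverse, List.mem_reverse] at hz2
                  exact hP1S z hz1 (hS1sub z hz2)
                · rw [Walk.isPath_def]
                  simp [adj0r.ne]
                · intro z hz1 hz2
                  simp only [Walk.support_cons, Walk.support_nil, List.mem_cons,
                    List.mem_singleton, List.not_mem_nil, or_false] at hz2
                  rcases hz2 with rfl | rfl
                  · rfl
                  · exfalso
                    rcases mem_append_support.1 hz1 with h | h
                    · exact hPavoid _ (hP1sub _ h) ⟨0, by omega, Or.inl rfl⟩
                    · rw [Walk.support_reverse, List.mem_reverse] at h
                      exact hv_nd' (hS1sub _ h)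
              · rw [altEdges_iff, Walk.edges_append, altOff_append, Walk.edges_append,
                  altOff_append]
                refine ⟨⟨haltP1, ?_⟩, ?_⟩
                · rw [Walk.edges_reverse]
                  exact haltS1.reverse.congr (by omega)
                · rw [Walk.edges_cons, Walk.edges_nil, altOff_singleton,
                    List.length_append, hlrev]
                  exact ⟨fun _ => by omega, fun _ => by rw [Sym2.eq_swap]; exact hmedj⟩
            rcases hcaseP with ⟨hPm1, hPm2, hPpar⟩ | ⟨hPm1, hPm2, hPpar⟩ <;>
              rcases hcaseS with ⟨hSm1, hSm2, hSpar⟩ | ⟨hSm1, hSm2, hSpar⟩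
            · -- both arrive at w along the matched edge: impossible
              exfalso
              have hedge : dp1.edge = ds1.edge :=
                matching_unique hM hPm1 hSm1 (hdp1snd ▸ dart_mem_edge_snd dp1)
                  (hds1snd ▸ dart_mem_edge_snd ds1)
              have hfst : dp1.toProd.1 = ds1.toProd.1 := by
                have h2 : s(dp1.toProd.1, dp1.toProd.2) = s(ds1.toProd.1, ds1.toProd.2) :=
                  hedge
                rw [hdp1snd, hds1snd, Sym2.eq_iff] at h2
                rcases h2 with ⟨h3, _⟩ | ⟨h3, h4⟩
                · exact h3
                · exact absurd (by rw [h3, hdp1snd] :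
                    dp1.toProd.1 = dp1.toProd.2) (dart_fst_ne_snd dp1)
              have hws : dp1.toProd.1 ∈ P1.support :=
                Walk.dart_fst_mem_support_of_mem_darts P1 hdp1m
              have hws2 : dp1.toProd.1 ∈ d'.support := by
                refine hS1sub _ ?_
                rw [hfst]
                exact Walk.dart_fst_mem_support_of_mem_darts S1 hds1m
              have h5 := hP1S _ hws hws2
              refine dart_fst_ne_snd dp1 ?_
              rw [h5, hdp1snd]
            · -- P arrives, S departs
              exact comb1 (by omega)
            · -- P departs, S arrives
              exact comb1 (by omega)
            · -- both depart: splice and recurse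
              have hQhat_path : (P1.append S2).IsPath := by
                refine isPath_append hPp.of_append_left hd'p'.of_append_right ?_
                intro z hz1 hz2
                exact hP1S z hz1 (hS2sub z hz2)
              have hl1 : P1.edges.length = P1.length := P1.length_edges
              have hQhat_alt : AltOff M 0 (P1.append S2).edges := by
                rw [Walk.edges_append, altOff_append]
                exact ⟨haltP1, haltS2.congr (by omega)⟩
              have hS2last : S2.darts.getLast? = some dQ := by
                rw [hd'split, getLast?_darts_append_right hS2nil] at hd'last
                exact hd'last
              have hQhat_end : EndsWithArc (P1.append S2) ((a x).swap) := by
                refine endsWithArc_of_getLast ?_ hdQtp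
                rw [getLast?_darts_append_right hS2nil]
                exact hS2last
              have hsup1 : (P1.append S2).support = P1.support ++ S2.support.tail :=
                Walk.support_append _ _
              have hsupd' : d'.support = S1.support ++ S2.support.tail := by
                rw [hd'split]; exact Walk.support_append _ _
              have hμP1 : (P1.support.filter fun z => decide (CarcIn a x z)).length = 0 := by
                rw [List.length_eq_zero_iff, List.filter_eq_nil_iff]
                intro z hz
                simpa using hPavoid z (hP1sub z hz)
              have hμQ1 : 1 ≤ (Q1.support.filter fun z => decide (CarcIn a x z)).length := by
                have hmem : (a 0).1 ∈ Q1.support.filter fun z => decide (CarcIn a x z) :=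
                  List.mem_filter.2 ⟨Q1.end_mem_support, by
                    simp only [decide_eq_true_eq]
                    exact ⟨0, by omega, Or.inl rfl⟩⟩
                exact List.length_pos_iff.2 (List.ne_nil_of_mem hmem)
              have hμS1 : 1 ≤ (S1.support.filter fun z => decide (CarcIn a x z)).length := by
                have hmem : (a 0).2 ∈ S1.support.filter fun z => decide (CarcIn a x z) :=
                  List.mem_filter.2 ⟨S1.start_mem_support, by
                    simp only [decide_eq_true_eq]
                    exact ⟨0, by omega, Or.inr rfl⟩⟩
                exact List.length_pos_iff.2 (List.ne_nil_of_mem hmem)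
              refine ih x hx1 hx2 (P1.append P2) hPp hPalt hPend hPavoid (P1.append S2)
                hQhat_path hQhat_alt hQhat_end ?_
              have hQfilter := hmeas
              rw [hQsup, List.filter_append, List.length_append, hsupd', List.filter_append,
                List.length_append] at hQfilter
              rw [hsup1, List.filter_append, List.length_append, hμP1]
              omega
        · -- CASE C : recurse at j < x
          have adjj : G.Adj (a j).1 (a j).2 := G.mem_edgeSet.1 (hM.1 hmedj)
          have hsingle : (Walk.cons adjj Walk.nil).IsPath := by
            rw [Walk.isPath_def]
            simp [adjj.ne]
          have hssup : (Walk.cons adjj Walk.nil).support = [(a j).1, (a j).2] := by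
            simp
          have hPjp : (Q1.append (Walk.cons adjj Walk.nil)).IsPath := by
            refine isPath_append hQp.of_append_left hsingle ?_
            intro z hz1 hz2
            rw [hssup] at hz2
            simp only [List.mem_cons, List.mem_singleton, List.not_mem_nil, or_false] at hz2
            rcases hz2 with rfl | rfl
            · exact hQmin _ hz1 ⟨j, hjx, Or.inl rfl⟩
            · exact hQmin _ hz1 ⟨j, hjx, Or.inr rfl⟩
          have hPjalt : AltOff M 0 (Q1.append (Walk.cons adjj Walk.nil)).edges := by
            rw [Walk.edges_append, altOff_append]
            refine ⟨haltQ1, ?_⟩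
            rw [Walk.edges_cons, Walk.edges_nil, altOff_singleton]
            have hl : Q1.edges.length = Q1.length := Q1.length_edges
            constructor
            · intro _; omega
            · intro _; exact hmedj
          have hPjend : EndsWithArc (Q1.append (Walk.cons adjj Walk.nil)) (a j) :=
            endsWithArc_append (endsWithArc_single adjj)
          have hPjav : ∀ z ∈ (Q1.append (Walk.cons adjj Walk.nil)).support,
              ¬ CarcIn a j z := by
            intro z hz hCz
            obtain ⟨i, hij, hzi⟩ := hCz
            have hz' := mem_append_support.1 hz
            have hzj : z = (a j).1 ∨ z = (a j).2 := by
              rcases hz' with h | h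
              · left; exact hQmin _ h ⟨i, by omega, hzi⟩
              · rw [hssup] at h
                simpa using h
            have := arc_mem_eq hM harc (by omega : i ≤ k) hjk hzi hzj
            omega
          obtain ⟨Qj, hQjp, hQjalt, hQjend⟩ := (hmid j hj1 (by omega)).2
          have hμj : (Qj.support.filter fun z => decide (CarcIn a j z)).length ≤
              Fintype.card V :=
            le_trans (List.length_filter_le _ _) (hQjp.support_nodup.length_le_card)
          refine ih j hj1 (by omega) _ hPjp hPjalt hPjend hPjav Qj hQjp
            (altEdges_iff.1 hQjalt) hQjend ?_
          have f1 : j * (Fintype.card V + 1) + (Fintype.card V + 1)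
              ≤ x * (Fintype.card V + 1) := by
            calc j * (Fintype.card V + 1) + (Fintype.card V + 1)
                = (j + 1) * (Fintype.card V + 1) := by ring
              _ ≤ x * (Fintype.card V + 1) := Nat.mul_le_mul_right _ (by omega)
          omega
      · -- CASE D: v = (a j).2, departure along the reverse arc
        have hv2 : v = (a j).2 := by rw [← hd2fst, htp]
        subst hv2
        obtain ⟨c, hcalt, hcnd, hclen, hcmem, hclast⟩ := chain_exists hM harc j hjk
        have adj2 : G.Adj (a j).2 (a j).1 := (G.mem_edgeSet.1 (hM.1 hmedj)).symm
        have hcons_path : (Walk.cons adj2 c).IsPath := by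
          rw [Walk.isPath_def, Walk.support_cons, List.nodup_cons]
          refine ⟨?_, hcnd⟩
          intro hc
          rcases hcmem _ hc with h | ⟨i, hij, hzi⟩
          · exact arc_fst_ne_snd hM harc hjk h.symm
          · have := arc_mem_eq hM harc hjk (by omega : i ≤ k) (Or.inr rfl) hzi
            omega
        refine ⟨Q1.append (Walk.cons adj2 c), ?_, ?_, ?_⟩
        · refine isPath_append hQp.of_append_left hcons_path ?_
          intro z hz1 hz2
          rw [Walk.support_cons, List.mem_cons] at hz2
          rcases hz2 with rfl | hz2
          · rfl
          · rcases hcmem _ hz2 with h | h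
            · exact hQmin _ hz1 ⟨j, hjx, Or.inl h⟩
            · exact hQmin _ hz1 (carcIn_mono (by omega) h)
        · rw [altEdges_iff, Walk.edges_append, altOff_append, Walk.edges_cons, altOff_cons]
          have hl : Q1.edges.length = Q1.length := Q1.length_edges
          refine ⟨haltQ1, ⟨fun _ => by omega, fun _ => by rwa [Sym2.eq_swap]⟩,
            hcalt.congr (by omega)⟩
        · refine endsWithArc_append (p1 := Q1) ?_
          rcases Nat.eq_zero_or_pos j with rfl | hj1
          · have hnil : c.darts = [] := List.length_eq_zero_iff.1 (by omega)
            unfold EndsWithArc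
            rw [Walk.darts_cons, hnil]
            rfl
          · unfold EndsWithArc
            rw [Walk.darts_cons, getLast?_cons_of_ne _ (by
                intro hc; rw [hc] at hclen; simp at hclen; omega)]
            exact hclast hj1

end NAC

/-- Lemma on non-active cycles. Let `(a 0, …, a k)` be an
alternating path of matched arcs such that there are `M`-alternating paths from
the free vertex `α` to `a 0` and to `(a k).swap`, and, for every `1 ≤ i ≤ k - 1`,
to both `a i` and `(a i).swap`. If for some `1 ≤ x ≤ k` there is an
`M`-alternating path from `α` to `a x` traversing none of the arcs `a j`,
`(a j).swap` for `j < x`, then there is an `M`-alternating path from `α` to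
`(a 0).swap`. -/
theorem alt_path_to_reverse_of_first_arc
    [Fintype V] (G : SimpleGraph V) (M : Set (Sym2 V)) (hM : IsMatchingSet G M)
    (α : V) (hα : FreeVertex M α)
    (a : ℕ → V × V) (k : ℕ) (harc : IsArcPathFn G M a (k + 1))
    (h0 : IsAltPathToArc G M α (a 0))
    (hlast : IsAltPathToArc G M α ((a k).swap))
    (hmid : ∀ i, 1 ≤ i → i < k →
      IsAltPathToArc G M α (a i) ∧ IsAltPathToArc G M α ((a i).swap))
    (x : ℕ) (hx1 : 1 ≤ x) (hx2 : x ≤ k)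
    (P : G.Walk α (a x).2) (hP : P.IsPath) (hPalt : AltEdges M P.edges)
    (hPend : EndsWithArc P (a x))
    (havoid : ∀ j < x, ¬ Traverses P (a j) ∧ ¬ Traverses P ((a j).swap)) :
    IsAltPathToArc G M α ((a 0).swap) := by
  classical
  have hPavoid : ∀ z ∈ P.support, ¬ NAC.CarcIn a x z := by
    intro z hz hC
    obtain ⟨j, hjx, hzj⟩ := hC
    have hjk : j ≤ k := by omega
    have hmedj : s((a j).1, (a j).2) ∈ M := harc.1 j (by omega)
    have hzmem : z ∈ s((a j).1, (a j).2) := Sym2.mem_iff.2 hzj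
    have hzα : α ≠ z := fun hc => hα _ hmedj (hc ▸ hzmem)
    have hzend : z ≠ (a x).2 := by
      intro hc
      have := NAC.arc_mem_eq hM harc hjk hx2 hzj (Or.inr hc)
      omega
    obtain ⟨w, P1, P2, hPsplit, hwz, -⟩ :=
      NAC.split_first P (fun y => z = y) ⟨z, hz, rfl⟩
    subst hwz
    have hPp' : (P1.append P2).IsPath := hPsplit ▸ hP
    have haltP : NAC.AltOff M 0 (P1.append P2).edges :=
      hPsplit ▸ (NAC.altEdges_iff.1 hPalt)
    have hP1nil : ¬P1.Nil := SimpleGraph.Walk.not_nil_of_ne hzα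
    have hP2nil : ¬P2.Nil := SimpleGraph.Walk.not_nil_of_ne hzend
    obtain ⟨d1, d2, hd1l, hd2h, hd1m, hd2m, hd1snd, hd2fst, -, -, hcase⟩ :=
      NAC.junction hM haltP hP1nil hP2nil hmedj hzmem
    have hdarts : ∀ d : G.Dart, d ∈ P1.darts ∨ d ∈ P2.darts → d ∈ P.darts := by
      intro d hd
      rw [hPsplit, SimpleGraph.Walk.darts_append, List.mem_append]
      exact hd
    rcases hcase with ⟨hde, -, -⟩ | ⟨hde, -, -⟩
    · rcases NAC.dart_toProd_of_edge_eq hde with htp | htp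
      · exact (havoid j hjx).1 ⟨d1, hdarts _ (Or.inl hd1m), htp⟩
      · exact (havoid j hjx).2 ⟨d1, hdarts _ (Or.inl hd1m), htp⟩
    · rcases NAC.dart_toProd_of_edge_eq hde with htp | htp
      · exact (havoid j hjx).1 ⟨d2, hdarts _ (Or.inr hd2m), htp⟩
      · exact (havoid j hjx).2 ⟨d2, hdarts _ (Or.inr hd2m), htp⟩
  rcases Nat.lt_or_ge x k with hlt | hge
  · obtain ⟨Qx, hQxp, hQxalt, hQxend⟩ := (hmid x hx1 hlt).2
    exact NAC.master G M hM α hα a k harc hmid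
      (x * (Fintype.card V + 1)
        + (Qx.support.filter fun z => decide (NAC.CarcIn a x z)).length)
      x hx1 hx2 P hP (NAC.altEdges_iff.1 hPalt) hPend hPavoid Qx hQxp
      (NAC.altEdges_iff.1 hQxalt) hQxend le_rfl
  · have hxk : x = k := by omega
    subst hxk
    obtain ⟨Qx, hQxp, hQxalt, hQxend⟩ := hlast
    exact NAC.master G M hM α hα a x harc hmid
      (x * (Fintype.card V + 1)
        + (Qx.support.filter fun z => decide (NAC.CarcIn a x z)).length)
      x hx1 hx2 P hP (NAC.altEdges_iff.1 hPalt) hPend hPavoid Qx hQxp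
      (NAC.altEdges_iff.1 hQxalt) hQxend le_rfl
end

section
/- Let G be a finite simple graph with matching M, α a free vertex, and S a set of matched arcs such that for every arc b ∈ S there exists an M-alternating path from α to b all of whose traversed matched arcs belong to S. Fix an arc a* ∈ S and let S' be the set of arcs b ∈ S for which there exists an M-alternating path from α to b all of whose traversed matched arcs belong to S and which does not traverse a*. Then for every arc b ∈ S' there exists an M-alternating path from α to b all of whose traversed matched arcs belong to S'. -/
/-!
Common definitions: matchings as sets of edges, free vertices, alternating
paths (edge membership in `M` alternates, starting with a non-matching edge),
matched arcs (directed traversals of matched edges), etc.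
-/

variable {V : Type*}

/-- There is an `M`-alternating path from `α` to the arc `b` all of whose
traversed matched arcs belong to `S`. -/
def ReachableWithin (G : SimpleGraph V) (M : Set (Sym2 V)) (α : V)
    (S : Set (V × V)) (b : V × V) : Prop :=
  ∃ p : G.Walk α b.2, p.IsPath ∧ AltEdges M p.edges ∧ EndsWithArc p b ∧
    ∀ d ∈ p.darts, SimpleGraph.Dart.edge d ∈ M → SimpleGraph.Dart.toProd d ∈ S

/-- There is an `M`-alternating path from `α` to the arc `b` all of whose
traversed matched arcs belong to `S` and which does not traverse `astar`. -/
def ReachableAvoiding (G : SimpleGraph V) (M : Set (Sym2 V)) (α : V)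
    (S : Set (V × V)) (astar : V × V) (b : V × V) : Prop :=
  ∃ p : G.Walk α b.2, p.IsPath ∧ AltEdges M p.edges ∧ EndsWithArc p b ∧
    (∀ d ∈ p.darts, SimpleGraph.Dart.edge d ∈ M → SimpleGraph.Dart.toProd d ∈ S) ∧
    ¬ Traverses p astar

lemma altEdges_prefix {M : Set (Sym2 V)} {l₁ l₂ : List (Sym2 V)}
    (h : AltEdges M (l₁ ++ l₂)) : AltEdges M l₁ := by
  intro i hi
  have h2 := h i (by rw [List.length_append]; omega)
  rwa [List.getElem_append_left hi] at h2

/-- Let `S` be a set of matched arcs each reachable from the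
free vertex `α` by an `M`-alternating path whose traversed matched arcs all lie
in `S`. Fix `astar ∈ S` and let `S'` be the set of arcs of `S` reachable from
`α` within `S` while avoiding `astar`. Then every arc of `S'` is reachable from
`α` by an `M`-alternating path whose traversed matched arcs all lie in `S'`. -/
theorem reachable_avoiding_is_closed
    [Fintype V] (G : SimpleGraph V) (M : Set (Sym2 V)) (hM : IsMatchingSet G M)
    (α : V) (hα : FreeVertex M α)
    (S : Set (V × V)) (hSarcs : ∀ a ∈ S, s(a.1, a.2) ∈ M)
    (hSreach : ∀ b ∈ S, ReachableWithin G M α S b)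
    (astar : V × V) (hstar : astar ∈ S) :
    ∀ b ∈ S, ReachableAvoiding G M α S astar b →
      ∃ p : G.Walk α b.2, p.IsPath ∧ AltEdges M p.edges ∧ EndsWithArc p b ∧
        ∀ d ∈ p.darts, SimpleGraph.Dart.edge d ∈ M →
          SimpleGraph.Dart.toProd d ∈ S ∧
            ReachableAvoiding G M α S astar (SimpleGraph.Dart.toProd d) := by
  classical
  rintro b hb ⟨p, hpath, halt, hend, hS, havoid⟩
  refine ⟨p, hpath, halt, hend, fun d hd hdM => ⟨hS d hd hdM, ?_⟩⟩
  have hsupp : d.snd ∈ p.support := p.dart_snd_mem_support_of_mem_darts hd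
  set q := p.takeUntil d.snd hsupp with hq
  have hsub : q.darts ⊆ p.darts := p.darts_takeUntil_subset hsupp
  have hne : α ≠ d.snd := by
    intro h
    exact hα d.edge hdM (by rw [h, SimpleGraph.Dart.edge]; exact Sym2.mem_mk_right _ _)
  have hqne : q.darts ≠ [] := by
    intro h0
    have hl : q.length = 0 := by
      have := congrArg List.length h0
      simpa [SimpleGraph.Walk.length_darts] using this
    exact hne (SimpleGraph.Walk.eq_of_length_eq_zero hl)
  have hnodup : (p.darts.map (·.snd)).Nodup := by
    rw [p.map_snd_darts]; exact hpath.support_nodup.tail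
  have hlast_snd : (q.darts.getLast hqne).snd = d.snd := by
    rw [SimpleGraph.Walk.getLast_darts_eq_lastDart]; rfl
  have hdeq : q.darts.getLast hqne = d :=
    List.inj_on_of_nodup_map hnodup (hsub (List.getLast_mem hqne)) hd hlast_snd
  have hedges : q.edges ++ (p.dropUntil d.snd hsupp).edges = p.edges := by
    rw [← SimpleGraph.Walk.edges_append, SimpleGraph.Walk.take_spec]
  refine ⟨q, hpath.takeUntil hsupp, ?_, ?_, fun d' hd' hM' => hS d' (hsub hd') hM', ?_⟩
  · exact altEdges_prefix (by rwa [hedges])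
  · show q.darts.getLast?.map SimpleGraph.Dart.toProd = some d.toProd
    rw [List.getLast?_eq_getLast hqne, hdeq, Option.map_some]
  · rintro ⟨d', hd', he⟩
    exact havoid ⟨d', hsub hd', he⟩
end
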